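/- Let X be a real m×p matrix with m ≥ p such that XᵀX is invertible, and let d_min > 0 be the smallest eigenvalue of (1/m)XᵀX. Let σ² > 0, ε > 0, β⁰ ∈ ℝ^p, and let β̂(y) = (XᵀX)⁻¹Xᵀy. Then for y ∼ N(Xβ⁰, σ²I_m), P(‖β̂(y) − β⁰‖₂ > ε√p/2) ≤ exp{−(ε²·d_min/(16σ²) − log 2/(2m))·m·p}. In particular, if m > 8(log 2)σ²/(ε²·d_min), this bound is strictly less than 1 and decays exponentially in m·p. -/

import Mathlib

open MeasureTheory Matrix

/-- The Lebesgue density of the Gaussian measure `N(μ, σ²I_m)` on `ℝ^m`. -/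
noncomputable def gaussDensity (m : ℕ) (μ : Fin m → ℝ) (σ2 : ℝ) (y : Fin m → ℝ) : ℝ :=
  (2 * Real.pi * σ2) ^ (-(m : ℝ) / 2) * Real.exp (-(∑ i, (y i - μ i) ^ 2) / (2 * σ2))

/-- The Gaussian probability measure `N(μ, σ²I_m)` on `ℝ^m`, given by its density
with respect to Lebesgue measure. -/
noncomputable def gaussMeasure (m : ℕ) (μ : Fin m → ℝ) (σ2 : ℝ) : Measure (Fin m → ℝ) :=
  volume.withDensity fun y => ENNReal.ofReal (gaussDensity m μ σ2 y)

/-- The ordinary least squares estimator `β̂(y) = (XᵀX)⁻¹Xᵀy`. -/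
noncomputable def ols (m p : ℕ) (X : Matrix (Fin m) (Fin p) ℝ) (y : Fin m → ℝ) :
    Fin p → ℝ :=
  ((Xᵀ * X)⁻¹).mulVec (Xᵀ.mulVec y)

/-!
Write `z = y - Xβ⁰ ∼ N(0, σ²I_m)`, so that `β̂(y) - β⁰ = (XᵀX)⁻¹Xᵀz`. Its squared norm is at
most `zᵀHz / (m d_min)`, where `H = X(XᵀX)⁻¹Xᵀ` is the hat matrix, an orthogonal projection of
rank `p`. Chernoff's bound at parameter `1/(4σ²)` gives
`P(zᵀHz ≥ t) ≤ e^{-t/(4σ²)} E e^{zᵀHz/(4σ²)}`, and in an eigenbasis of `H` the moment generating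
function factors into one-dimensional Gaussian integrals, `p` of which equal `√2` and the others
`1`.
-/

namespace Matrix

variable {n : Type*} [Fintype n] [DecidableEq n]

lemma dotProduct_mulVec_self_of_mem_orthogonalGroup {U : Matrix n n ℝ}
    (hU : U ∈ orthogonalGroup n ℝ) (w : n → ℝ) : (U *ᵥ w) ⬝ᵥ (U *ᵥ w) = w ⬝ᵥ w := by
  rw [dotProduct_mulVec, ← mulVec_transpose, mulVec_mulVec, (mem_orthogonalGroup_iff' n ℝ).1 hU,
    one_mulVec]

lemma abs_det_of_mem_orthogonalGroup {U : Matrix n n ℝ} (hU : U ∈ orthogonalGroup n ℝ) :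
    |U.det| = 1 := by
  have h := congrArg det ((mem_orthogonalGroup_iff' n ℝ).1 hU)
  rw [det_mul, det_transpose, det_one, ← sq, ← sq_abs] at h
  exact (pow_eq_one_iff_of_nonneg (abs_nonneg _) two_ne_zero).1 h

lemma measurePreserving_mulVec_of_mem_orthogonalGroup {U : Matrix n n ℝ}
    (hU : U ∈ orthogonalGroup n ℝ) : MeasurePreserving (U *ᵥ ·) volume volume := by
  have hdet : U.det ≠ 0 := fun h => by simpa [h] using abs_det_of_mem_orthogonalGroup hU
  refine ⟨(toLin' U).continuous_of_finiteDimensional.measurable, ?_⟩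
  have h := Real.map_matrix_volume_pi_eq_smul_volume_pi hdet
  rwa [abs_inv, abs_det_of_mem_orthogonalGroup hU, inv_one, ENNReal.ofReal_one, one_smul] at h

namespace IsHermitian

variable {A : Matrix n n ℝ} (hA : A.IsHermitian)
include hA

lemma dotProduct_mulVec_eigenvectorUnitary_mulVec (w : n → ℝ) :
    ((hA.eigenvectorUnitary : Matrix n n ℝ) *ᵥ w) ⬝ᵥ
        A *ᵥ ((hA.eigenvectorUnitary : Matrix n n ℝ) *ᵥ w) =
      ∑ i, hA.eigenvalues i * w i ^ 2 := by
  set U : Matrix n n ℝ := ↑hA.eigenvectorUnitary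
  have hdiag : Uᵀ * A * U = diagonal hA.eigenvalues := by
    simpa [Unitary.conjStarAlgAut_star_apply, star_eq_conjTranspose] using
      hA.conjStarAlgAut_star_eigenvectorUnitary
  rw [mulVec_mulVec, dotProduct_comm, dotProduct_mulVec, ← mulVec_transpose, mulVec_mulVec,
    ← Matrix.mul_assoc, hdiag]
  simp only [dotProduct, mulVec_diagonal, sq, mul_assoc]

lemma mul_dotProduct_self_le {d : ℝ} (hd : ∀ i, d ≤ hA.eigenvalues i) (v : n → ℝ) :
    d * (v ⬝ᵥ v) ≤ v ⬝ᵥ A *ᵥ v := by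
  have hU : (hA.eigenvectorUnitary : Matrix n n ℝ) ∈ orthogonalGroup n ℝ :=
    hA.eigenvectorUnitary.2
  obtain ⟨w, rfl⟩ : ∃ w, (hA.eigenvectorUnitary : Matrix n n ℝ) *ᵥ w = v :=
    ⟨(hA.eigenvectorUnitary : Matrix n n ℝ)ᵀ *ᵥ v, by
      rw [mulVec_mulVec, (mem_orthogonalGroup_iff n ℝ).1 hU, one_mulVec]⟩
  rw [dotProduct_mulVec_self_of_mem_orthogonalGroup hU,
    dotProduct_mulVec_eigenvectorUnitary_mulVec, dotProduct, Finset.mul_sum]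
  exact Finset.sum_le_sum fun i _ => by
    rw [← sq]; exact mul_le_mul_of_nonneg_right (hd i) (sq_nonneg _)

lemma eigenvalues_eq_zero_or_one_of_isIdempotentElem (hA' : IsIdempotentElem A) (i : n) :
    hA.eigenvalues i = 0 ∨ hA.eigenvalues i = 1 :=
  hA'.spectrum_subset ℝ (hA.eigenvalues_mem_spectrum_real i)

end IsHermitian

end Matrix

section HatMatrix

variable {ι κ : Type*} [Fintype ι] [Fintype κ] [DecidableEq κ]

noncomputable def hatMatrix (X : Matrix ι κ ℝ) : Matrix ι ι ℝ := X * (Xᵀ * X)⁻¹ * Xᵀ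

lemma isHermitian_hatMatrix (X : Matrix ι κ ℝ) : (hatMatrix X).IsHermitian := by
  rw [IsHermitian, conjTranspose_eq_transpose_of_trivial, hatMatrix, transpose_mul,
    transpose_mul, transpose_transpose, transpose_nonsing_inv, transpose_mul, transpose_transpose,
    Matrix.mul_assoc]

variable {X : Matrix ι κ ℝ} (hX : IsUnit (Xᵀ * X).det)
include hX

lemma isIdempotentElem_hatMatrix : IsIdempotentElem (hatMatrix X) := by
  calc hatMatrix X * hatMatrix X = X * (Xᵀ * X)⁻¹ * ((Xᵀ * X) * (Xᵀ * X)⁻¹) * Xᵀ := by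
        simp only [hatMatrix, Matrix.mul_assoc]
    _ = hatMatrix X := by rw [mul_nonsing_inv _ hX, Matrix.mul_one, hatMatrix]

lemma trace_hatMatrix : (hatMatrix X).trace = Fintype.card κ := by
  rw [hatMatrix, trace_mul_comm, ← Matrix.mul_assoc, mul_nonsing_inv _ hX, trace_one]

end HatMatrix

section OLS

variable {m p : ℕ} {X : Matrix (Fin m) (Fin p) ℝ}

lemma hatMatrix_mulVec (z : Fin m → ℝ) : hatMatrix X *ᵥ z = X *ᵥ ols m p X z := by
  rw [hatMatrix, ols, mulVec_mulVec, mulVec_mulVec, Matrix.mul_assoc]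

variable (hX : IsUnit (Xᵀ * X).det)
include hX

lemma ols_add_mulVec (z : Fin m → ℝ) (β : Fin p → ℝ) :
    ols m p X (z + X *ᵥ β) = ols m p X z + β := by
  rw [ols, ols, mulVec_add, mulVec_mulVec β Xᵀ, mulVec_add, mulVec_mulVec β,
    nonsing_inv_mul _ hX, one_mulVec]

lemma dotProduct_hatMatrix_mulVec (z : Fin m → ℝ) :
    z ⬝ᵥ hatMatrix X *ᵥ z = ols m p X z ⬝ᵥ (Xᵀ * X) *ᵥ ols m p X z := by
  have hnormal : (Xᵀ * X) *ᵥ ols m p X z = Xᵀ *ᵥ z := by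
    rw [ols, mulVec_mulVec, mul_nonsing_inv _ hX, one_mulVec]
  rw [hatMatrix_mulVec, dotProduct_mulVec, ← mulVec_transpose, hnormal, dotProduct_comm]

variable {dmin : ℝ} (hm : m ≠ 0) (hH : (((m : ℝ)⁻¹) • (Xᵀ * X)).IsHermitian)
  (hd : ∀ i, dmin ≤ hH.eigenvalues i)
include hm hd

lemma mul_dotProduct_ols_self_le (z : Fin m → ℝ) :
    m * dmin * (ols m p X z ⬝ᵥ ols m p X z) ≤ z ⬝ᵥ hatMatrix X *ᵥ z := by
  rw [dotProduct_hatMatrix_mulVec hX]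
  set v := ols m p X z
  have h := hH.mul_dotProduct_self_le hd v
  rw [smul_mulVec, dotProduct_smul, smul_eq_mul] at h
  calc m * dmin * (v ⬝ᵥ v) = m * (dmin * (v ⬝ᵥ v)) := by ring
    _ ≤ m * ((m : ℝ)⁻¹ * (v ⬝ᵥ (Xᵀ * X) *ᵥ v)) := by gcongr
    _ = v ⬝ᵥ (Xᵀ * X) *ᵥ v := by field_simp

lemma preimage_add_ols_deviation_subset (hdmin : 0 ≤ dmin) (β0 : Fin p → ℝ) {r : ℝ}
    (hr : 0 ≤ r) :
    (· + X *ᵥ β0) ⁻¹' {y | r < √(∑ k, (ols m p X y k - β0 k) ^ 2)} ⊆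
      {z | m * dmin * r ^ 2 ≤ z ⬝ᵥ hatMatrix X *ᵥ z} := by
  intro z hz
  simp only [Set.mem_preimage, Set.mem_ofPred_eq, ols_add_mulVec hX, Pi.add_apply,
    add_sub_cancel_right, Real.lt_sqrt hr] at hz
  have hr2 : r ^ 2 ≤ ols m p X z ⬝ᵥ ols m p X z := by
    simpa only [dotProduct, sq] using hz.le
  exact (mul_le_mul_of_nonneg_left hr2 (mul_nonneg m.cast_nonneg hdmin)).trans
    (mul_dotProduct_ols_self_le hX hm hH hd z)

end OLS

section Gaussian

open Real

variable {m : ℕ} {σ2 : ℝ}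

@[fun_prop]
lemma continuous_gaussDensity (μ : Fin m → ℝ) : Continuous (gaussDensity m μ σ2) := by
  unfold gaussDensity; fun_prop

lemma gaussDensity_nonneg (hσ2 : 0 < σ2) (μ y : Fin m → ℝ) : 0 ≤ gaussDensity m μ σ2 y := by
  unfold gaussDensity; positivity

lemma gaussDensity_add (μ z : Fin m → ℝ) :
    gaussDensity m μ σ2 (z + μ) = gaussDensity m 0 σ2 z := by
  simp [gaussDensity]

lemma gaussMeasure_apply_eq_preimage_add (μ : Fin m → ℝ) (s : Set (Fin m → ℝ)) :
    gaussMeasure m μ σ2 s = gaussMeasure m 0 σ2 ((· + μ) ⁻¹' s) := by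
  rw [gaussMeasure, gaussMeasure, withDensity_apply', withDensity_apply',
    ← (measurePreserving_add_right volume μ).setLIntegral_comp_preimage_emb
      (measurableEmbedding_addRight μ)]
  simp_rw [gaussDensity_add]

lemma gaussDensity_zero_mulVec {U : Matrix (Fin m) (Fin m) ℝ}
    (hU : U ∈ orthogonalGroup (Fin m) ℝ) (w : Fin m → ℝ) :
    gaussDensity m 0 σ2 (U *ᵥ w) = gaussDensity m 0 σ2 w := by
  have h := dotProduct_mulVec_self_of_mem_orthogonalGroup hU w
  simp only [dotProduct, ← sq] at h
  simp [gaussDensity, h]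

/-- The density of `N(0, σ²)` times `x ↦ e^{c x² / (4σ²)}`. -/
noncomputable def tiltedGaussDensity (σ2 c x : ℝ) : ℝ :=
  (2 * π * σ2) ^ (-(1 : ℝ) / 2) * exp (-((2 - c) / (4 * σ2)) * x ^ 2)

lemma tiltedGaussDensity_nonneg (hσ2 : 0 < σ2) (c x : ℝ) : 0 ≤ tiltedGaussDensity σ2 c x := by
  unfold tiltedGaussDensity; positivity

lemma integrable_tiltedGaussDensity (hσ2 : 0 < σ2) {c : ℝ} (hc : c < 2) :
    Integrable (tiltedGaussDensity σ2 c) :=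
  (integrable_exp_neg_mul_sq (div_pos (sub_pos.2 hc) (by positivity))).const_mul _

lemma integral_tiltedGaussDensity (hσ2 : 0 < σ2) {c : ℝ} (hc : c < 2) :
    ∫ x, tiltedGaussDensity σ2 c x = √(2 / (2 - c)) := by
  have hc' : 0 < 2 - c := sub_pos.2 hc
  unfold tiltedGaussDensity
  rw [integral_const_mul, integral_gaussian, neg_div,
    rpow_neg (by positivity), ← sqrt_eq_rpow, ← sqrt_inv, ← sqrt_mul (by positivity)]
  congr 1
  field_simp
  ring

lemma gaussDensity_zero_mul_exp_eq_prod (hσ2 : 0 < σ2) (c w : Fin m → ℝ) :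
    gaussDensity m 0 σ2 w * exp ((∑ i, c i * w i ^ 2) / (4 * σ2)) =
      ∏ i, tiltedGaussDensity σ2 (c i) (w i) := by
  unfold tiltedGaussDensity
  rw [Finset.prod_mul_distrib, Finset.prod_const, Finset.card_univ, Fintype.card_fin,
    ← rpow_natCast, ← rpow_mul (by positivity), ← exp_sum, gaussDensity,
    mul_assoc, ← exp_add]
  congr 2
  · ring
  · simp only [Pi.zero_apply, sub_zero, neg_div, Finset.sum_div, ← Finset.sum_neg_distrib,
      ← Finset.sum_add_distrib]
    refine Finset.sum_congr rfl fun i _ => ?_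
    field_simp
    ring

lemma lintegral_exp_dotProduct_mulVec_gaussMeasure_zero (hσ2 : 0 < σ2)
    {P : Matrix (Fin m) (Fin m) ℝ} (hP : P.IsHermitian) (hP2 : ∀ i, hP.eigenvalues i < 2) :
    ∫⁻ z, ENNReal.ofReal (exp (z ⬝ᵥ P *ᵥ z / (4 * σ2))) ∂gaussMeasure m 0 σ2 =
      ENNReal.ofReal (∏ i, √(2 / (2 - hP.eigenvalues i))) := by
  have hU : (hP.eigenvectorUnitary : Matrix (Fin m) (Fin m) ℝ) ∈ orthogonalGroup (Fin m) ℝ :=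
    hP.eigenvectorUnitary.2
  let f : (Fin m → ℝ) → ℝ := fun z => gaussDensity m 0 σ2 z * exp (z ⬝ᵥ P *ᵥ z / (4 * σ2))
  calc _ = ∫⁻ z, ENNReal.ofReal (f z) := by
        rw [gaussMeasure, lintegral_withDensity_eq_lintegral_mul _ (by fun_prop) (by fun_prop)]
        simp only [f, Pi.mul_apply, ENNReal.ofReal_mul (gaussDensity_nonneg hσ2 _ _)]
    _ = ∫⁻ w, ENNReal.ofReal (f ((hP.eigenvectorUnitary : Matrix (Fin m) (Fin m) ℝ) *ᵥ w)) :=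
        ((measurePreserving_mulVec_of_mem_orthogonalGroup hU).lintegral_comp
          (by unfold f; fun_prop)).symm
    _ = ∫⁻ w : Fin m → ℝ, ENNReal.ofReal (∏ i, tiltedGaussDensity σ2 (hP.eigenvalues i) (w i)) := by
        simp only [f, gaussDensity_zero_mulVec hU, hP.dotProduct_mulVec_eigenvectorUnitary_mulVec,
          gaussDensity_zero_mul_exp_eq_prod hσ2]
    _ = ENNReal.ofReal (∫ w : Fin m → ℝ, ∏ i, tiltedGaussDensity σ2 (hP.eigenvalues i) (w i)) :=
        (ofReal_integral_eq_lintegral_ofReal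
          (Integrable.fintype_prod fun i => integrable_tiltedGaussDensity hσ2 (hP2 i))
          (ae_of_all _ fun _ => Finset.prod_nonneg fun _ _ => tiltedGaussDensity_nonneg hσ2 _ _)).symm
    _ = _ := by
        rw [integral_fintype_prod_volume_eq_prod fun i => tiltedGaussDensity σ2 (hP.eigenvalues i)]
        simp_rw [integral_tiltedGaussDensity hσ2 (hP2 _)]

lemma sqrt_two_div_two_sub_eq_exp {c : ℝ} (hc : c = 0 ∨ c = 1) :
    √(2 / (2 - c)) = exp (c * log 2 / 2) := by
  rcases hc with rfl | rfl
  · simp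
  · rw [show (2 : ℝ) / (2 - 1) = 2 by norm_num, sqrt_eq_rpow, rpow_def_of_pos two_pos]
    ring_nf

lemma gaussMeasure_zero_le_dotProduct_mulVec_le (hσ2 : 0 < σ2) {P : Matrix (Fin m) (Fin m) ℝ}
    (hP : P.IsHermitian) (hPP : IsIdempotentElem P) (t : ℝ) :
    gaussMeasure m 0 σ2 {z | t ≤ z ⬝ᵥ P *ᵥ z} ≤
      ENNReal.ofReal (exp (-t / (4 * σ2) + P.trace * log 2 / 2)) := by
  have h01 := hP.eigenvalues_eq_zero_or_one_of_isIdempotentElem hPP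
  have hmgf : ∫⁻ z, ENNReal.ofReal (exp (z ⬝ᵥ P *ᵥ z / (4 * σ2))) ∂gaussMeasure m 0 σ2 =
      ENNReal.ofReal (exp (P.trace * log 2 / 2)) := by
    rw [lintegral_exp_dotProduct_mulVec_gaussMeasure_zero hσ2 hP
      fun i => by rcases h01 i with h | h <;> rw [h] <;> norm_num]
    simp_rw [sqrt_two_div_two_sub_eq_exp (h01 _), ← exp_sum, hP.trace_eq_sum_eigenvalues,
      RCLike.ofReal_real_eq_id, id, Finset.sum_mul, Finset.sum_div]
  calc gaussMeasure m 0 σ2 {z | t ≤ z ⬝ᵥ P *ᵥ z}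
      ≤ gaussMeasure m 0 σ2 {z | ENNReal.ofReal (exp (t / (4 * σ2))) ≤
          ENNReal.ofReal (exp (z ⬝ᵥ P *ᵥ z / (4 * σ2)))} :=
        measure_mono fun z hz => ENNReal.ofReal_le_ofReal (exp_le_exp.2 (by gcongr; exact hz))
    _ ≤ (∫⁻ z, ENNReal.ofReal (exp (z ⬝ᵥ P *ᵥ z / (4 * σ2))) ∂gaussMeasure m 0 σ2) /
          ENNReal.ofReal (exp (t / (4 * σ2))) :=
        meas_ge_le_lintegral_div (by fun_prop) (by simpa using exp_pos _) ENNReal.ofReal_ne_top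
    _ = ENNReal.ofReal (exp (-t / (4 * σ2) + P.trace * log 2 / 2)) := by
        rw [hmgf, ← ENNReal.ofReal_div_of_pos (exp_pos _), ← exp_sub]
        ring_nf

end Gaussian

theorem ols_deviation_bound_null (m p : ℕ) (hmp : p ≤ m)
    (X : Matrix (Fin m) (Fin p) ℝ) (hX : IsUnit (Xᵀ * X).det)
    (dmin σ2 ε : ℝ) (hσ2 : 0 < σ2) (hε : 0 < ε)
    (hH : (((m : ℝ)⁻¹) • (Xᵀ * X)).IsHermitian)
    (hdmin : IsLeast (Set.range hH.eigenvalues) dmin) (hdpos : 0 < dmin)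
    (β0 : Fin p → ℝ) :
    gaussMeasure m (X.mulVec β0) σ2
        {y | ε * Real.sqrt p / 2 < Real.sqrt (∑ k, (ols m p X y k - β0 k) ^ 2)}
      ≤ ENNReal.ofReal
          (Real.exp (-(ε ^ 2 * dmin / (16 * σ2) - Real.log 2 / (2 * m)) * m * p)) ∧
    (8 * Real.log 2 * σ2 / (ε ^ 2 * dmin) < (m : ℝ) →
      0 < ε ^ 2 * dmin / (16 * σ2) - Real.log 2 / (2 * m) ∧
      Real.exp (-(ε ^ 2 * dmin / (16 * σ2) - Real.log 2 / (2 * m)) * m * p) < 1) := by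
  obtain ⟨i₀, -⟩ := hdmin.1
  have hp : 0 < p := i₀.pos
  have hm : 0 < m := hp.trans_le hmp
  have hd : ∀ i, dmin ≤ hH.eigenvalues i := fun i => hdmin.2 ⟨i, rfl⟩
  refine ⟨?_, fun hlarge => ?_⟩
  · calc gaussMeasure m (X *ᵥ β0) σ2
          {y | ε * Real.sqrt p / 2 < Real.sqrt (∑ k, (ols m p X y k - β0 k) ^ 2)}
        ≤ gaussMeasure m 0 σ2
            {z | m * dmin * (ε * Real.sqrt p / 2) ^ 2 ≤ z ⬝ᵥ hatMatrix X *ᵥ z} := by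
          rw [gaussMeasure_apply_eq_preimage_add]
          exact measure_mono (preimage_add_ols_deviation_subset hX hm.ne' hH hd hdpos.le β0
            (by positivity))
      _ ≤ ENNReal.ofReal (Real.exp (-(m * dmin * (ε * Real.sqrt p / 2) ^ 2) / (4 * σ2) +
            (hatMatrix X).trace * Real.log 2 / 2)) :=
          gaussMeasure_zero_le_dotProduct_mulVec_le hσ2 (isHermitian_hatMatrix X)
            (isIdempotentElem_hatMatrix hX) _
      _ = _ := by
          rw [trace_hatMatrix hX, Fintype.card_fin, div_pow, mul_pow,
            Real.sq_sqrt (Nat.cast_nonneg p)]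
          congr 2
          field_simp
          ring
  · have hrate : 0 < ε ^ 2 * dmin / (16 * σ2) - Real.log 2 / (2 * m) := by
      have hlog : 0 < Real.log 2 := Real.log_pos one_lt_two
      rw [div_lt_iff₀ (by positivity)] at hlarge
      rw [sub_pos, div_lt_div_iff₀ (by positivity) (by positivity)]
      nlinarith
    refine ⟨hrate, Real.exp_lt_one_iff.2 ?_⟩
    have : 0 < (ε ^ 2 * dmin / (16 * σ2) - Real.log 2 / (2 * m)) * m * p := by positivity
    linarith
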